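/- For every two-qubit Schmidt-correlated state ρ with coefficients c1, c2, c4, there exist 2×2 unitary matrices U1, U2 and real numbers λ1, λ2, λ4 ≥ 0 with λ1 ≥ λ4, λ1 + λ4 = 1 and λ1·λ4 ≥ λ2², such that (U1⊗U2) ρ (U1⊗U2)† = λ1|00⟩⟨00| + λ2|00⟩⟨11| + λ2|11⟩⟨00| + λ4|11⟩⟨11|. (This matrix is called the standard form of ρ.) -/

import Mathlib

/-! A local phase `diag(e^{-i arg c2}, 1)` on the first qubit makes the coherence `c2` real and
nonnegative, and `σₓ ⊗ σₓ` exchanges `|00⟩` and `|11⟩`, hence `c1` and `c4`, so that the larger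
weight can be put first. -/

open Matrix Kronecker

/-- The two-qubit Schmidt-correlated state
`ρ = c1|00⟩⟨00| + c2|00⟩⟨11| + conj(c2)|11⟩⟨00| + c4|11⟩⟨11|`,
written in the product basis of `ℂ² ⊗ ℂ²` indexed by `Fin 2 × Fin 2`. -/
noncomputable def scState (c1 c4 : ℝ) (c2 : ℂ) :
    Matrix (Fin 2 × Fin 2) (Fin 2 × Fin 2) ℂ :=
  Matrix.of fun p q =>
    if p = (0, 0) ∧ q = (0, 0) then (c1 : ℂ)
    else if p = (0, 0) ∧ q = (1, 1) then c2
    else if p = (1, 1) ∧ q = (0, 0) then (starRingEnd ℂ) c2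
    else if p = (1, 1) ∧ q = (1, 1) then (c4 : ℂ)
    else 0

def LUEquiv {m n : Type*} [Fintype m] [Fintype n] [DecidableEq m] [DecidableEq n]
    (ρ σ : Matrix (m × n) (m × n) ℂ) : Prop :=
  ∃ U1 U2, U1 ∈ unitaryGroup m ℂ ∧ U2 ∈ unitaryGroup n ℂ ∧ (U1 ⊗ₖ U2) * ρ * (U1 ⊗ₖ U2)ᴴ = σ

namespace LUEquiv

variable {m n : Type*} [Fintype m] [Fintype n] [DecidableEq m] [DecidableEq n]
  {ρ σ τ : Matrix (m × n) (m × n) ℂ}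

theorem trans (h₁ : LUEquiv ρ σ) (h₂ : LUEquiv σ τ) : LUEquiv ρ τ := by
  obtain ⟨U1, U2, hU1, hU2, rfl⟩ := h₁
  obtain ⟨V1, V2, hV1, hV2, rfl⟩ := h₂
  refine ⟨V1 * U1, V2 * U2, mul_mem hV1 hU1, mul_mem hV2 hU2, ?_⟩
  simp only [mul_kronecker_mul, conjTranspose_mul, Matrix.mul_assoc]

end LUEquiv

theorem luEquiv_scState_phase (c1 c4 : ℝ) (c2 u : ℂ) (hu : ‖u‖ = 1) :
    LUEquiv (scState c1 c4 c2) (scState c1 c4 (u * c2)) := by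
  have hu' : u * starRingEnd ℂ u = 1 := by
    rw [Complex.mul_conj, Complex.normSq_eq_norm_sq, hu]; norm_num
  refine ⟨diagonal ![u, 1], 1, ?_, one_mem _, ?_⟩
  · rw [mem_unitaryGroup_iff, star_eq_conjTranspose, diagonal_conjTranspose,
      diagonal_mul_diagonal, ← diagonal_one]
    congr 1
    ext i; fin_cases i <;> simp [hu']
  · rw [← diagonal_one, diagonal_kronecker_diagonal, diagonal_conjTranspose]
    ext ⟨i, j⟩ ⟨k, l⟩
    fin_cases i <;> fin_cases j <;> fin_cases k <;> fin_cases l <;>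
      simp [scState, diagonal_mul, mul_diagonal] <;> grind

theorem luEquiv_scState_swap (c1 c4 : ℝ) (c2 : ℂ) :
    LUEquiv (scState c1 c4 c2) (scState c4 c1 (starRingEnd ℂ c2)) := by
  have hX : !![(0 : ℂ), 1; 1, 0] ∈ unitaryGroup (Fin 2) ℂ := by
    rw [mem_unitaryGroup_iff]
    ext i j; fin_cases i <;> fin_cases j <;> simp [Matrix.mul_apply, Fin.sum_univ_two]
  refine ⟨_, _, hX, hX, ?_⟩
  ext ⟨i, j⟩ ⟨k, l⟩
  fin_cases i <;> fin_cases j <;> fin_cases k <;> fin_cases l <;>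
    simp [scState, Matrix.mul_apply, Fintype.sum_prod_type, Fin.sum_univ_two]

theorem luEquiv_scState_norm (c1 c4 : ℝ) (c2 : ℂ) :
    LUEquiv (scState c1 c4 c2) (scState c1 c4 (‖c2‖ : ℂ)) := by
  have hu : ‖Complex.exp (-(c2.arg : ℂ) * Complex.I)‖ = 1 := by
    simpa using Complex.norm_exp_ofReal_mul_I (-c2.arg)
  convert luEquiv_scState_phase c1 c4 c2 _ hu using 2
  conv_rhs => rw [← Complex.norm_mul_exp_arg_mul_I c2]
  rw [mul_left_comm, ← Complex.exp_add]
  simp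

theorem sc_standard_form (c1 c4 : ℝ) (c2 : ℂ)
    (hc1 : 0 ≤ c1) (hc4 : 0 ≤ c4) (hsum : c1 + c4 = 1)
    (hc2 : ‖c2‖ ^ 2 ≤ c1 * c4) :
    ∃ U1 U2 : Matrix (Fin 2) (Fin 2) ℂ,
      U1 ∈ Matrix.unitaryGroup (Fin 2) ℂ ∧ U2 ∈ Matrix.unitaryGroup (Fin 2) ℂ ∧
      ∃ l1 l2 l4 : ℝ, 0 ≤ l1 ∧ 0 ≤ l2 ∧ 0 ≤ l4 ∧ l4 ≤ l1 ∧ l1 + l4 = 1 ∧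
        l2 ^ 2 ≤ l1 * l4 ∧
        (U1 ⊗ₖ U2) * scState c1 c4 c2 * (U1 ⊗ₖ U2)ᴴ = scState l1 l4 (l2 : ℂ) := by
  rcases le_total c4 c1 with hle | hle
  · obtain ⟨U1, U2, hU1, hU2, hρ⟩ := luEquiv_scState_norm c1 c4 c2
    exact ⟨U1, U2, hU1, hU2, c1, ‖c2‖, c4, hc1, norm_nonneg _, hc4, hle, hsum, hc2, hρ⟩
  · obtain ⟨U1, U2, hU1, hU2, hρ⟩ :=
      (luEquiv_scState_swap c1 c4 c2).trans (luEquiv_scState_norm c4 c1 _)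
    rw [Complex.norm_conj] at hρ
    exact ⟨U1, U2, hU1, hU2, c4, ‖c2‖, c1, hc4, norm_nonneg _, hc1, hle, by linarith,
      by linarith, hρ⟩
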